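/- arXiv:1803.10399 — 5 statements merged into one kernel-verified Lean document; each statement's English description precedes it below -/
import Mathlib

section
/- Let A be a bounded subset of ℝ^N and δ > 0. For all s ∈ ℂ for which both sides are defined by absolutely convergent integrals, ∫_{A_δ} d(x,A)^{s−N} dx = δ^{s−N}|A_δ| + (N−s)·∫_0^δ |A_ε| ε^{s−N−1} dε. -/
open MeasureTheory Metric Set

/-- FTC helper: `∫_{(t,δ)} ε^{w-1} dε = (δ^w - t^w)/w`. -/
lemma aux_ftc_stmt8 {δ t : ℝ} (htδ : t ≤ δ) {w : ℂ} (hw : w ≠ 0)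
    (h : 0 < t ∨ 0 < w.re) :
    ∫ ε in Set.Ioo t δ, (ε : ℂ) ^ (w - 1) = ((δ : ℂ) ^ w - (t : ℂ) ^ w) / w := by
  have hcase : -1 < (w - 1).re ∨ (w - 1) ≠ -1 ∧ (0 : ℝ) ∉ Set.uIcc t δ := by
    rcases h with h | h
    · right
      constructor
      · intro hc
        apply hw
        have := congrArg (· + 1) hc
        simpa using this
      · rw [Set.uIcc_of_le htδ]
        intro hc
        exact absurd hc.1 (not_le.2 h)
    · left
      simp [Complex.sub_re, Complex.one_re]
      linarith
  have := integral_cpow (a := t) (b := δ) (r := w - 1) hcase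
  rw [intervalIntegral.integral_of_le htδ, MeasureTheory.integral_Ioc_eq_integral_Ioo] at this
  rw [this]
  norm_num

/-- If `ε ↦ ε^{w-1}` is integrable on `(0,δ)` (complex power), then `0 < Re w`. -/
lemma aux_int_rpow_stmt8 {δ : ℝ} (hδ : 0 < δ) {w : ℂ}
    (h : IntegrableOn (fun ε : ℝ => (ε : ℂ) ^ (w - 1)) (Set.Ioo 0 δ)) : 0 < w.re := by
  have h' : IntegrableOn (fun ε : ℝ => ε ^ ((w - 1).re)) (Set.Ioo 0 δ) := by
    refine h.norm.congr ?_
    filter_upwards [ae_restrict_mem measurableSet_Ioo] with ε hε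
    rw [Complex.norm_cpow_eq_rpow_re_of_pos hε.1]
  have := (intervalIntegral.integrableOn_Ioo_rpow_iff hδ).1 h'
  have h2 : (w - 1).re = w.re - 1 := by simp [Complex.sub_re]
  rw [h2] at this
  linarith

lemma aux_int_rpow_stmt8' {δ : ℝ} (hδ : 0 < δ) {w : ℂ} {c : ℝ} (hc : c ≠ 0)
    (h : IntegrableOn (fun ε : ℝ => (c : ℂ) * (ε : ℂ) ^ (w - 1)) (Set.Ioo 0 δ)) :
    0 < w.re := by
  apply aux_int_rpow_stmt8 hδ
  have h' := h.const_mul ((c : ℂ)⁻¹)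
  refine h'.congr (Filter.Eventually.of_forall fun ε => ?_)
  have : (c : ℂ) ≠ 0 := by exact_mod_cast hc
  field_simp

/-- Functional equation relating the distance and tube zeta functions of a bounded
set `A ⊆ ℝ^N`: for all `s` for which both sides are given by absolutely
convergent integrals,
`∫_{A_δ} d(x,A)^{s−N} dx = δ^{s−N}|A_δ| + (N−s)·∫_0^δ |A_ε| ε^{s−N−1} dε`. -/
theorem stmt_8 (N : ℕ) (A : Set (EuclideanSpace ℝ (Fin N)))
    (hA : Bornology.IsBounded A) (δ : ℝ) (hδ : 0 < δ) (s : ℂ)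
    (h1 : IntegrableOn (fun x => ((Metric.infDist x A : ℝ) : ℂ) ^ (s - (N : ℂ)))
      {x : EuclideanSpace ℝ (Fin N) | Metric.infDist x A < δ})
    (h2 : IntegrableOn (fun ε : ℝ =>
        ((volume {x : EuclideanSpace ℝ (Fin N) | Metric.infDist x A < ε}).toReal : ℂ)
          * (ε : ℂ) ^ (s - (N : ℂ) - 1)) (Set.Ioo (0 : ℝ) δ)) :
    ∫ x in {x : EuclideanSpace ℝ (Fin N) | Metric.infDist x A < δ},
        ((Metric.infDist x A : ℝ) : ℂ) ^ (s - (N : ℂ))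
      = (δ : ℂ) ^ (s - (N : ℂ))
          * ((volume {x : EuclideanSpace ℝ (Fin N) | Metric.infDist x A < δ}).toReal : ℂ)
        + ((N : ℂ) - s) *
          ∫ ε in Set.Ioo (0 : ℝ) δ,
            ((volume {x : EuclideanSpace ℝ (Fin N) | Metric.infDist x A < ε}).toReal : ℂ)
              * (ε : ℂ) ^ (s - (N : ℂ) - 1) := by
  classical
  set w : ℂ := s - (N : ℂ) with hwdef
  set d : EuclideanSpace ℝ (Fin N) → ℝ := fun x => Metric.infDist x A with hddef
  have hNs : (N : ℂ) - s = -w := by rw [hwdef]; ring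
  have hdcont : Continuous d := Metric.continuous_infDist_pt A
  have hTm : ∀ ε : ℝ, MeasurableSet {x : EuclideanSpace ℝ (Fin N) | d x < ε} :=
    fun ε => (isOpen_lt hdcont continuous_const).measurableSet
  -- case s = N
  by_cases hsN : w = 0
  · have hNs0 : (N : ℂ) - s = 0 := by rw [hNs, hsN, neg_zero]
    simp only [hsN, hNs0, Complex.cpow_zero, zero_mul, add_zero, one_mul]
    rw [MeasureTheory.setIntegral_const]
    simp [Measure.real]
  -- case A = ∅
  by_cases hAe : A = ∅
  · have hd0 : ∀ x, d x = 0 := by intro x; rw [hddef]; rw [hAe]; exact Metric.infDist_empty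
    have huniv : {x : EuclideanSpace ℝ (Fin N) | d x < δ} = Set.univ :=
      Set.eq_univ_of_forall fun x => by simpa [hd0 x] using hδ
    have hεuniv : ∀ ε ∈ Set.Ioo (0:ℝ) δ,
        {x : EuclideanSpace ℝ (Fin N) | d x < ε} = Set.univ :=
      fun ε hε => Set.eq_univ_of_forall fun x => by simpa [hd0 x] using hε.1
    set c : ℝ := (volume (Set.univ : Set (EuclideanSpace ℝ (Fin N)))).toReal with hcdef
    have hLHS : (∫ x in {x : EuclideanSpace ℝ (Fin N) | d x < δ},
        ((d x : ℝ) : ℂ) ^ w) = 0 := by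
      have : ∀ x : EuclideanSpace ℝ (Fin N), ((d x : ℝ) : ℂ) ^ w = 0 := fun x => by
        rw [hd0 x]; exact_mod_cast Complex.zero_cpow hsN
      simp [this]
    rw [hLHS, huniv]
    have hae : ∀ᵐ ε ∂(volume.restrict (Set.Ioo (0:ℝ) δ)),
        ((volume {x : EuclideanSpace ℝ (Fin N) | d x < ε}).toReal : ℂ) * (ε : ℂ) ^ (w - 1)
          = (c : ℂ) * (ε : ℂ) ^ (w - 1) := by
      filter_upwards [ae_restrict_mem measurableSet_Ioo] with ε hε
      rw [hεuniv ε hε]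
    by_cases hc : c = 0
    · have : (∫ ε in Set.Ioo (0:ℝ) δ,
          ((volume {x : EuclideanSpace ℝ (Fin N) | d x < ε}).toReal : ℂ) * (ε : ℂ) ^ (w - 1)) = 0 := by
        rw [integral_congr_ae hae]
        simp [hc]
      have hc' : (volume (Set.univ : Set (EuclideanSpace ℝ (Fin N)))).toReal = 0 := by
        rw [← hcdef]; exact hc
      rw [this, hc']
      simp
    · have h2' : IntegrableOn (fun ε : ℝ => (c : ℂ) * (ε : ℂ) ^ (w - 1)) (Set.Ioo 0 δ) :=
        h2.congr hae
      have hre : 0 < w.re := aux_int_rpow_stmt8' hδ hc h2'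
      have hcalc : (∫ ε in Set.Ioo (0:ℝ) δ,
          ((volume {x : EuclideanSpace ℝ (Fin N) | d x < ε}).toReal : ℂ) * (ε : ℂ) ^ (w - 1))
            = (c : ℂ) * ((δ : ℂ) ^ w / w) := by
        rw [integral_congr_ae hae, integral_const_mul,
          aux_ftc_stmt8 hδ.le hsN (Or.inr hre)]
        rw [Complex.ofReal_zero, Complex.zero_cpow hsN]
        ring_nf
      rw [hcalc, hNs]
      field_simp
      ring
  -- main case : A nonempty, s ≠ N
  have hAne : A.Nonempty := Set.nonempty_iff_ne_empty.2 hAe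
  set T : Set (EuclideanSpace ℝ (Fin N)) := {x | d x < δ} with hTdef
  -- T has finite measure
  have hfin : volume T < ⊤ := by
    obtain ⟨a, ha⟩ := id hAne
    obtain ⟨r, hr⟩ := hA.subset_closedBall a
    have hsubB : T ⊆ Metric.closedBall a (r + δ) := by
      intro x hx
      obtain ⟨y, hyA, hxy⟩ := (Metric.infDist_lt_iff hAne).1 hx
      have hya : dist y a ≤ r := hr hyA
      have : dist x a ≤ dist x y + dist y a := dist_triangle x y a
      simp only [Metric.mem_closedBall]
      linarith
    exact (measure_mono hsubB).trans_lt Metric.isBounded_closedBall.measure_lt_top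
  have hsubT : ∀ ε : ℝ, ε ≤ δ → {x : EuclideanSpace ℝ (Fin N) | d x < ε} ⊆ T :=
    fun ε hε x hx => lt_of_lt_of_le hx hε
  -- either Re w > 0, or the closure of A is null
  have hclosnull : 0 < w.re ∨ volume (closure A) = 0 := by
    by_cases hre : 0 < w.re
    · exact Or.inl hre
    right
    by_contra hcne
    have hclossub : closure A ⊆ T := by
      intro x hx
      have : d x = 0 := Metric.infDist_zero_of_mem_closure hx
      simp only [hTdef, Set.mem_setOf_eq, this]; exact hδ
    have hclosfin : volume (closure A) < ⊤ := (measure_mono hclossub).trans_lt hfin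
    set c : ℝ := (volume (closure A)).toReal with hcdef
    have hc0 : c ≠ 0 := by
      simp only [hcdef, ne_eq, ENNReal.toReal_eq_zero_iff]
      push_neg
      exact ⟨hcne, hclosfin.ne⟩
    have hint : IntegrableOn (fun ε : ℝ => (c : ℂ) * (ε : ℂ) ^ (w - 1)) (Set.Ioo 0 δ) := by
      refine Integrable.mono h2 ?_ ?_
      · exact (((Complex.measurable_ofReal.comp measurable_id).pow
          measurable_const).const_mul _).aestronglyMeasurable
      · filter_upwards [ae_restrict_mem measurableSet_Ioo] with ε hε
        rw [norm_mul, norm_mul]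
        apply mul_le_mul_of_nonneg_right _ (norm_nonneg _)
        rw [Complex.norm_real, Complex.norm_real, Real.norm_of_nonneg ENNReal.toReal_nonneg,
          Real.norm_of_nonneg ENNReal.toReal_nonneg]
        apply ENNReal.toReal_mono
        · exact ((measure_mono (hsubT ε hε.2.le)).trans_lt hfin).ne
        · apply measure_mono
          intro x hx
          have hx0 : Metric.infDist x A = 0 := Metric.infDist_zero_of_mem_closure hx
          simp only [Set.mem_setOf_eq, hddef, hx0]
          exact hε.1
    exact hre (aux_int_rpow_stmt8' hδ hc0 hint)
  -- the pointwise (a.e.) functional identity on T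
  have hzero : ∀ᵐ x ∂(volume.restrict T), 0 < d x ∨ 0 < w.re := by
    rcases hclosnull with hre | hnull
    · exact Filter.Eventually.of_forall fun x => Or.inr hre
    · have hsub : {x : EuclideanSpace ℝ (Fin N) | ¬(0 < d x ∨ 0 < w.re)} ⊆ closure A := by
        intro x hx
        simp only [Set.mem_setOf_eq, not_or, not_lt] at hx
        have h0 : d x = 0 := le_antisymm hx.1 Metric.infDist_nonneg
        exact (Metric.mem_closure_iff_infDist_zero hAne).2 h0
      have : ∀ᵐ x ∂(volume : Measure (EuclideanSpace ℝ (Fin N))), 0 < d x ∨ 0 < w.re := by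
        rw [MeasureTheory.ae_iff]
        exact measure_mono_null hsub hnull
      exact ae_restrict_of_ae this
  have key : ∀ᵐ x ∂(volume.restrict T),
      ((d x : ℝ) : ℂ) ^ w
        = (δ : ℂ) ^ w + ((N : ℂ) - s) * ∫ ε in Set.Ioo (d x) δ, (ε : ℂ) ^ (w - 1) := by
    filter_upwards [hzero, ae_restrict_mem (hTm δ)] with x hx hxT
    rw [aux_ftc_stmt8 (le_of_lt hxT) hsN hx, hNs]
    field_simp
    ring
  -- integrability of the inner-integral term
  have hconst : Integrable (fun _ : EuclideanSpace ℝ (Fin N) => (δ : ℂ) ^ w)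
      (volume.restrict T) := integrableOn_const hfin.ne
  have hGint : Integrable (fun x => ((N : ℂ) - s) * ∫ ε in Set.Ioo (d x) δ, (ε : ℂ) ^ (w - 1))
      (volume.restrict T) := by
    refine (h1.sub hconst).congr ?_
    filter_upwards [key] with x hx
    simp only [hddef] at hx
    simp only [Pi.sub_apply]
    rw [hx]; ring
  -- Fubini setup
  set F : ℝ × EuclideanSpace ℝ (Fin N) → ℂ :=
    fun p => Set.indicator {q : ℝ × EuclideanSpace ℝ (Fin N) | d q.2 < q.1}
      (fun q => (q.1 : ℂ) ^ (w - 1)) p with hFdef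
  have hSopen : IsOpen {q : ℝ × EuclideanSpace ℝ (Fin N) | d q.2 < q.1} :=
    isOpen_lt (hdcont.comp continuous_snd) continuous_fst
  have hFmeas : AEStronglyMeasurable F
      ((volume.restrict (Set.Ioo (0:ℝ) δ)).prod (volume.restrict T)) :=
    (((Complex.measurable_ofReal.comp measurable_fst).pow measurable_const).indicator
      hSopen.measurableSet).aestronglyMeasurable
  have hFx : ∀ ε : ℝ, (fun x => F (ε, x))
      = Set.indicator {x : EuclideanSpace ℝ (Fin N) | d x < ε}
          (fun _ => (ε : ℂ) ^ (w - 1)) := by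
    intro ε; funext x
    simp only [hFdef, Set.indicator_apply, Set.mem_setOf_eq]
  have hFε : ∀ x : EuclideanSpace ℝ (Fin N), (fun ε => F (ε, x))
      = Set.indicator (Set.Ioi (d x)) (fun ε : ℝ => (ε : ℂ) ^ (w - 1)) := by
    intro x; funext ε
    simp only [hFdef, Set.indicator_apply, Set.mem_setOf_eq, Set.mem_Ioi]
  have hFint : Integrable F
      ((volume.restrict (Set.Ioo (0:ℝ) δ)).prod (volume.restrict T)) := by
    rw [integrable_prod_iff hFmeas]
    constructor
    · filter_upwards [ae_restrict_mem measurableSet_Ioo] with ε hε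
      rw [hFx ε]
      exact (integrableOn_const hfin.ne).indicator (hTm ε)
    · refine h2.norm.congr ?_
      filter_upwards [ae_restrict_mem measurableSet_Ioo] with ε hε
      have : (fun x => ‖F (ε, x)‖)
          = Set.indicator {x : EuclideanSpace ℝ (Fin N) | d x < ε}
              (fun _ => ‖(ε : ℂ) ^ (w - 1)‖) := by
        funext x
        have hx := congrFun (hFx ε) x
        rw [hx, Set.indicator_apply, Set.indicator_apply]
        split_ifs <;> simp
      rw [this, MeasureTheory.setIntegral_indicator (hTm ε),
        Set.inter_eq_right.2 (hsubT ε hε.2.le), MeasureTheory.setIntegral_const,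
        smul_eq_mul, norm_mul, Complex.norm_real, Real.norm_of_nonneg ENNReal.toReal_nonneg]
      rfl
  have hswap := MeasureTheory.integral_integral_swap (f := fun ε x => F (ε, x)) hFint
  have hinner_x : ∀ x : EuclideanSpace ℝ (Fin N),
      (∫ ε in Set.Ioo (0:ℝ) δ, F (ε, x)) = ∫ ε in Set.Ioo (d x) δ, (ε : ℂ) ^ (w - 1) := by
    intro x
    rw [hFε x, MeasureTheory.setIntegral_indicator measurableSet_Ioi,
      Set.Ioo_inter_Ioi, max_eq_right Metric.infDist_nonneg]
  have hinner_ε : ∀ᵐ ε ∂(volume.restrict (Set.Ioo (0:ℝ) δ)),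
      (∫ x in T, F (ε, x))
        = ((volume {x : EuclideanSpace ℝ (Fin N) | d x < ε}).toReal : ℂ)
            * (ε : ℂ) ^ (w - 1) := by
    filter_upwards [ae_restrict_mem measurableSet_Ioo] with ε hε
    rw [hFx ε, MeasureTheory.setIntegral_indicator (hTm ε),
      Set.inter_eq_right.2 (hsubT ε hε.2.le), MeasureTheory.setIntegral_const, Complex.real_smul]
    rfl
  have hfub : (∫ x in T, ∫ ε in Set.Ioo (d x) δ, (ε : ℂ) ^ (w - 1))
      = ∫ ε in Set.Ioo (0:ℝ) δ,
          ((volume {x : EuclideanSpace ℝ (Fin N) | d x < ε}).toReal : ℂ) * (ε : ℂ) ^ (w - 1) := by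
    rw [← integral_congr_ae hinner_ε, hswap]
    refine integral_congr_ae (Filter.Eventually.of_forall fun x => ?_)
    exact (hinner_x x).symm
  -- assemble
  calc ∫ x in T, ((d x : ℝ) : ℂ) ^ w
      = ∫ x in T, ((δ : ℂ) ^ w
          + ((N : ℂ) - s) * ∫ ε in Set.Ioo (d x) δ, (ε : ℂ) ^ (w - 1)) :=
        integral_congr_ae key
    _ = (∫ _x in T, (δ : ℂ) ^ w)
          + ∫ x in T, ((N : ℂ) - s) * ∫ ε in Set.Ioo (d x) δ, (ε : ℂ) ^ (w - 1) :=
        integral_add hconst hGint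
    _ = (δ : ℂ) ^ w * ((volume T).toReal : ℂ)
          + ((N : ℂ) - s) * ∫ x in T, ∫ ε in Set.Ioo (d x) δ, (ε : ℂ) ^ (w - 1) := by
        rw [MeasureTheory.setIntegral_const, Complex.real_smul, mul_comm,
          MeasureTheory.integral_const_mul]
        rfl
    _ = (δ : ℂ) ^ w * ((volume T).toReal : ℂ)
          + ((N : ℂ) - s) * ∫ ε in Set.Ioo (0:ℝ) δ,
              ((volume {x : EuclideanSpace ℝ (Fin N) | d x < ε}).toReal : ℂ)
                * (ε : ℂ) ^ (w - 1) := by rw [hfub]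
end

section
/- Let A ⊆ ℝ^N be bounded, λ > 0, and δ > 0. Then the distance zeta function satisfies the scaling property ζ_{λA}(s; λδ) = λ^s ζ_A(s; δ), i.e., ∫_{(λA)_{λδ}} d(x, λA)^{s−N} dx = λ^s ∫_{A_δ} d(x,A)^{s−N} dx, for all s ∈ ℂ with Re(s) large enough that both integrals converge absolutely. -/
open MeasureTheory Pointwise

/-- Scaling property of the distance zeta function: for bounded `A ⊆ ℝ^N`,
`λ > 0` and `δ > 0`, one has `ζ_{λA}(s; λδ) = λ^s ζ_A(s; δ)`, i.e.
`∫_{(λA)_{λδ}} d(x, λA)^{s−N} dx = λ^s ∫_{A_δ} d(x,A)^{s−N} dx`,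
for all `s ∈ ℂ` such that both integrals converge absolutely. -/
theorem stmt_9 (N : ℕ) (A : Set (EuclideanSpace ℝ (Fin N)))
    (hA : Bornology.IsBounded A) (lam δ : ℝ) (hlam : 0 < lam) (hδ : 0 < δ) (s : ℂ)
    (h1 : IntegrableOn (fun x => ((Metric.infDist x A : ℝ) : ℂ) ^ (s - (N : ℂ)))
      {x : EuclideanSpace ℝ (Fin N) | Metric.infDist x A < δ})
    (h2 : IntegrableOn
      (fun x => ((Metric.infDist x (lam • A) : ℝ) : ℂ) ^ (s - (N : ℂ)))
      {x : EuclideanSpace ℝ (Fin N) | Metric.infDist x (lam • A) < lam * δ}) :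
    ∫ x in {x : EuclideanSpace ℝ (Fin N) | Metric.infDist x (lam • A) < lam * δ},
        ((Metric.infDist x (lam • A) : ℝ) : ℂ) ^ (s - (N : ℂ))
      = (lam : ℂ) ^ s *
          ∫ x in {x : EuclideanSpace ℝ (Fin N) | Metric.infDist x A < δ},
            ((Metric.infDist x A : ℝ) : ℂ) ^ (s - (N : ℂ)) := by
  have hlam' : lam ≠ 0 := ne_of_gt hlam
  have hset : {x : EuclideanSpace ℝ (Fin N) | Metric.infDist x (lam • A) < lam * δ}
      = lam • {x : EuclideanSpace ℝ (Fin N) | Metric.infDist x A < δ} := by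
    ext x
    rw [Set.mem_smul_set_iff_inv_smul_mem₀ hlam']
    have : Metric.infDist x (lam • A) = lam * Metric.infDist (lam⁻¹ • x) A := by
      conv_lhs => rw [show x = lam • (lam⁻¹ • x) by
        rw [smul_smul, mul_inv_cancel₀ hlam', one_smul]]
      rw [infDist_smul₀ hlam', Real.norm_eq_abs, abs_of_pos hlam]
    simp only [Set.mem_setOf_eq, this]
    exact mul_lt_mul_iff_right₀ hlam
  have key := MeasureTheory.Measure.setIntegral_comp_smul_of_pos (μ := volume)
    (fun x => ((Metric.infDist x (lam • A) : ℝ) : ℂ) ^ (s - (N : ℂ)))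
    {x : EuclideanSpace ℝ (Fin N) | Metric.infDist x A < δ} hlam
  rw [finrank_euclideanSpace_fin] at key
  rw [hset]
  have hfin : ∫ x in lam • {x : EuclideanSpace ℝ (Fin N) | Metric.infDist x A < δ},
      ((Metric.infDist x (lam • A) : ℝ) : ℂ) ^ (s - (N : ℂ))
      = ((lam : ℂ) ^ (N : ℕ)) * ∫ x in {x : EuclideanSpace ℝ (Fin N) | Metric.infDist x A < δ},
          ((Metric.infDist (lam • x) (lam • A) : ℝ) : ℂ) ^ (s - (N : ℂ)) := by
    rw [key, Complex.real_smul]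
    push_cast
    rw [← mul_assoc, mul_inv_cancel₀ (pow_ne_zero N (by exact_mod_cast hlam')), one_mul]
  rw [hfin]
  have hint : ∀ x : EuclideanSpace ℝ (Fin N),
      ((Metric.infDist (lam • x) (lam • A) : ℝ) : ℂ) ^ (s - (N : ℂ))
      = (lam : ℂ) ^ (s - (N : ℂ)) * ((Metric.infDist x A : ℝ) : ℂ) ^ (s - (N : ℂ)) := by
    intro x
    rw [infDist_smul₀ hlam', Real.norm_eq_abs, abs_of_pos hlam, Complex.ofReal_mul,
      Complex.mul_cpow_ofReal_nonneg hlam.le Metric.infDist_nonneg]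
  simp_rw [hint]
  rw [integral_const_mul, ← mul_assoc]
  congr 1
  rw [← Complex.cpow_natCast, ← Complex.cpow_add _ _ (by exact_mod_cast hlam')]
  ring_nf
end

section
/- Let Ω be the open unit ball in ℝ^N and A = ∂Ω the unit sphere. Then for every s ∈ ℂ with Re(s) > N−1, ∫_Ω d(x,A)^{s−N} dx = N ω_N ∑_{j=0}^{N−1} binom(N−1, j) (−1)^{N−j−1}/(s−j), where ω_N is the volume of the unit ball; in particular the right-hand side defines the meromorphic continuation of the relative distance zeta function to all of ℂ, with simple poles exactly at {0, 1, …, N−1}. -/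
open MeasureTheory Filter Topology intervalIntegral Metric


lemma merosum (T : Finset ℕ) (c : ℕ → ℂ) (x : ℂ) :
    MeromorphicAt (fun s : ℂ => ∑ j ∈ T, c j / (s - (j : ℂ))) x := by
  classical
  induction T using Finset.induction with
  | empty => simpa using MeromorphicAt.const 0 x
  | insert n T' hnm ih =>
      have h : MeromorphicAt (fun s : ℂ => c n / (s - (n : ℂ))) x :=
        (MeromorphicAt.const _ x).div ((MeromorphicAt.id x).sub (MeromorphicAt.const _ x))
      simpa [Finset.sum_insert hnm, Pi.add_def] using h.add ih

lemma anasum (T : Finset ℕ) (c : ℕ → ℂ) (x : ℂ) (hx : ∀ j ∈ T, x ≠ (j : ℂ)) :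
    AnalyticAt ℂ (fun s : ℂ => ∑ j ∈ T, c j / (s - (j : ℂ))) x := by
  classical
  induction T using Finset.induction with
  | empty => simpa using analyticAt_const (v := (0:ℂ))
  | insert n T' hnm ih =>
      have h : AnalyticAt ℂ (fun s : ℂ => c n / (s - (n : ℂ))) x := by
        refine AnalyticAt.div analyticAt_const (analyticAt_id.sub analyticAt_const) ?_
        exact sub_ne_zero.2 (hx n (by simp))
      have := h.add (ih (fun j hj => hx j (Finset.mem_insert_of_mem hj)))
      simpa [Finset.sum_insert hnm, Pi.add_def] using this

lemma residue (N : ℕ) (c : ℕ → ℂ) (j : ℕ) (hj : j ∈ Finset.range N) :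
    Tendsto (fun s : ℂ => (s - (j:ℂ)) * ∑ i ∈ Finset.range N, c i / (s - (i : ℂ)))
      (𝓝[≠] (j:ℂ)) (𝓝 (c j)) := by
  classical
  set h : ℂ → ℂ := fun s => c j + (s - (j:ℂ)) *
    ∑ i ∈ (Finset.range N).erase j, c i / (s - (i : ℂ)) with hh
  have heq : ∀ s : ℂ, s ≠ (j:ℂ) →
      (s - (j:ℂ)) * ∑ i ∈ Finset.range N, c i / (s - (i : ℂ)) = h s := by
    intro s hs
    rw [← Finset.add_sum_erase _ _ hj, mul_add, hh]
    have : (s - (j:ℂ)) * (c j / (s - (j:ℂ))) = c j := by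
      rw [mul_comm, div_mul_cancel₀]
      exact sub_ne_zero.2 hs
    rw [this]
  have hcont : ContinuousAt h (j:ℂ) := by
    have ha : AnalyticAt ℂ (fun s : ℂ => ∑ i ∈ (Finset.range N).erase j, c i / (s - (i : ℂ)))
        (j:ℂ) := by
      refine anasum _ _ _ (fun i hi => ?_)
      have : i ≠ j := Finset.ne_of_mem_erase hi
      exact fun hc => this (Nat.cast_injective hc.symm)
    exact continuousAt_const.add ((continuousAt_id.sub continuousAt_const).mul ha.continuousAt)
  have hlim : Tendsto h (𝓝[≠] (j:ℂ)) (𝓝 (c j)) := by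
    have : h (j:ℂ) = c j := by simp [hh]
    simpa [this] using hcont.continuousWithinAt.tendsto
  refine hlim.congr' ?_
  filter_upwards [self_mem_nhdsWithin] with s hs
  exact (heq s hs).symm

lemma infdist_sphere {E : Type*} [NormedAddCommGroup E] [NormedSpace ℝ E] [Nontrivial E]
    (x : E) (hx : ‖x‖ < 1) : infDist x (sphere (0:E) 1) = 1 - ‖x‖ := by
  have hne : (sphere (0:E) 1).Nonempty := NormedSpace.sphere_nonempty.2 zero_le_one
  refine le_antisymm ?_ ?_
  · rcases eq_or_ne x 0 with rfl | hx0
    · obtain ⟨y, hy⟩ := hne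
      have hy1 : ‖y‖ = 1 := by simpa using hy
      have := infDist_le_dist_of_mem (x := (0:E)) hy
      simpa [dist_eq_norm, hy1] using this
    · have hn : 0 < ‖x‖ := norm_pos_iff.2 hx0
      have hmem : (‖x‖⁻¹ • x) ∈ sphere (0:E) 1 := by
        simp [norm_smul, abs_of_pos (inv_pos.2 hn), inv_mul_cancel₀ hn.ne']
      have hle := infDist_le_dist_of_mem (x := x) hmem
      have hd : dist x (‖x‖⁻¹ • x) = 1 - ‖x‖ := by
        rw [dist_eq_norm]
        have h2 : x - ‖x‖⁻¹ • x = (1 - ‖x‖⁻¹) • x := by rw [sub_smul, one_smul]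
        rw [h2, norm_smul, Real.norm_eq_abs]
        have h1 : (1:ℝ) < ‖x‖⁻¹ := (one_lt_inv₀ hn).2 hx
        rw [abs_of_neg (by linarith)]
        field_simp
        ring
      linarith [hd ▸ hle]
  · by_contra hlt
    push_neg at hlt
    obtain ⟨y, hy, hdy⟩ := (infDist_lt_iff hne).1 hlt
    have hy1 : ‖y‖ = 1 := by simpa using hy
    have : (1:ℝ) - ‖x‖ ≤ dist x y := by
      have := norm_sub_norm_le y x
      rw [hy1] at this
      calc (1:ℝ) - ‖x‖ ≤ ‖y - x‖ := this
        _ = dist x y := by rw [dist_eq_norm, norm_sub_rev]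
    linarith

-- binomial expansion
lemma binexp (N : ℕ) (hN : 0 < N) (z : ℂ) :
    (1 - z) ^ (N - 1) = ∑ k ∈ Finset.range N, ((N-1).choose k : ℂ) * (-1)^k * z^k := by
  have h := add_pow (-z) 1 (N - 1)
  rw [Nat.sub_add_cancel hN] at h
  rw [show (1 : ℂ) - z = -z + 1 by ring, h]
  refine Finset.sum_congr rfl (fun k hk => ?_)
  rw [one_pow, neg_pow]
  ring

lemma oneD (N : ℕ) (hN : 0 < N) (s : ℂ) (hs : (N:ℝ) - 1 < s.re) :
    ∫ y in (0:ℝ)..1, (1 - (y:ℂ)) ^ (N - 1) * (y:ℂ) ^ (s - (N:ℂ)) =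
      ∑ j ∈ Finset.range N, ((N - 1).choose j : ℂ) * (-1 : ℂ) ^ (N - j - 1) / (s - (j : ℂ)) := by
  have hre : -1 < (s - (N:ℂ)).re := by
    simp only [Complex.sub_re, Complex.natCast_re]; linarith
  have hint : ∀ k : ℕ, IntervalIntegrable
      (fun y : ℝ => ((N-1).choose k : ℂ) * (-1)^k * ((y:ℂ)^k * (y:ℂ)^(s-(N:ℂ)))) volume 0 1 := by
    intro k
    refine IntervalIntegrable.const_mul ?_ _
    refine (intervalIntegrable_cpow' hre).continuousOn_mul ?_
    exact (Complex.continuous_ofReal.pow k).continuousOn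
  calc
    ∫ y in (0:ℝ)..1, (1 - (y:ℂ)) ^ (N - 1) * (y:ℂ) ^ (s - (N:ℂ))
        = ∫ y in (0:ℝ)..1, ∑ k ∈ Finset.range N,
            ((N-1).choose k : ℂ) * (-1)^k * ((y:ℂ)^k * (y:ℂ)^(s-(N:ℂ))) := by
          refine integral_congr (fun y _ => ?_)
          rw [binexp N hN, Finset.sum_mul]
          exact Finset.sum_congr rfl (fun k _ => by ring)
    _ = ∑ k ∈ Finset.range N, ((N-1).choose k : ℂ) * (-1)^k *
          ∫ y in (0:ℝ)..1, (y:ℂ)^k * (y:ℂ)^(s-(N:ℂ)) := by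
          rw [intervalIntegral.integral_finset_sum (fun k _ => hint k)]
          exact Finset.sum_congr rfl (fun k _ => by rw [intervalIntegral.integral_const_mul])
    _ = ∑ k ∈ Finset.range N, ((N-1).choose k : ℂ) * (-1)^k / (s - (N:ℂ) + k + 1) := by
          refine Finset.sum_congr rfl (fun k hk => ?_)
          have hre2 : -1 < (s - (N:ℂ) + k).re := by
            simp only [Complex.add_re, Complex.sub_re, Complex.natCast_re]
            have : (0:ℝ) ≤ (k:ℝ) := Nat.cast_nonneg k
            linarith
          have hcongr : ∀ y ∈ Set.uIcc (0:ℝ) 1,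
              (y:ℂ)^k * (y:ℂ)^(s-(N:ℂ)) = (y:ℂ)^(s-(N:ℂ)+k) := by
            intro y hy
            rcases eq_or_ne y 0 with rfl | hy0
            · rcases Nat.eq_zero_or_pos k with rfl | hk0
              · simp
              · have h1 : ((0:ℝ):ℂ)^k = 0 := by
                  simp [zero_pow hk0.ne']
                have h2 : ((0:ℝ):ℂ)^(s-(N:ℂ)+k) = 0 := by
                  rw [Complex.ofReal_zero, Complex.zero_cpow]
                  intro hc
                  have := congrArg Complex.re hc
                  simp only [Complex.add_re, Complex.sub_re, Complex.natCast_re,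
                    Complex.zero_re] at this
                  have hk1 : (1:ℝ) ≤ (k:ℝ) := by exact_mod_cast hk0
                  linarith
                rw [h1, h2, zero_mul]
            · rw [← Complex.cpow_natCast, ← Complex.cpow_add _ _ (by exact_mod_cast hy0),
                add_comm]
          rw [integral_congr hcongr, integral_cpow (Or.inl hre2)]
          have hne : s - (N:ℂ) + k + 1 ≠ 0 := by
            intro hc
            have h4 := congrArg Complex.re hc
            simp only [Complex.add_re, Complex.sub_re, Complex.natCast_re, Complex.one_re,
              Complex.zero_re] at h4
            have h5 : (0:ℝ) ≤ (k:ℝ) := Nat.cast_nonneg k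
            linarith
          rw [Complex.ofReal_one, Complex.ofReal_zero, Complex.one_cpow, Complex.zero_cpow hne,
            sub_zero]
          rw [mul_one_div]
    _ = ∑ j ∈ Finset.range N, ((N - 1).choose j : ℂ) * (-1 : ℂ) ^ (N - j - 1) / (s - (j : ℂ)) := by
          rw [← Finset.sum_range_reflect]
          refine Finset.sum_congr rfl (fun j hj => ?_)
          have hjN : j ≤ N - 1 := Nat.le_sub_one_of_lt (Finset.mem_range.1 hj)
          have h1 : (N - 1).choose (N - 1 - j) = (N - 1).choose j := Nat.choose_symm hjN
          have h2 : N - 1 - j = N - j - 1 := by omega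
          have h3 : ((N - j - 1 : ℕ) : ℂ) = (N : ℂ) - 1 - j := by
            rw [Nat.cast_sub (by omega : 1 ≤ N - j), Nat.cast_sub (by omega : j ≤ N)]
            push_cast
            ring
          rw [h1, h2, h3]
          congr 1
          ring

lemma ball_int (N : ℕ) (hN : 0 < N) (s : ℂ) :
    ∫ x in ball (0 : EuclideanSpace ℝ (Fin N)) 1, ((1 - ‖x‖ : ℝ) : ℂ) ^ (s - (N:ℂ)) =
      (N:ℂ) * ((volume (ball (0 : EuclideanSpace ℝ (Fin N)) 1)).toReal : ℂ) *
        ∫ y in (0:ℝ)..1, (1 - (y:ℂ)) ^ (N - 1) * (y:ℂ) ^ (s - (N:ℂ)) := by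
  set E := EuclideanSpace ℝ (Fin N)
  haveI : Nontrivial E := by
    apply Module.nontrivial_of_finrank_pos (R := ℝ)
    rw [finrank_euclideanSpace_fin]; exact hN
  set f : ℝ → ℂ := fun t => if t < 1 then ((1 - t : ℝ) : ℂ) ^ (s - (N:ℂ)) else 0 with hf
  have step1 : ∫ x in ball (0:E) 1, ((1 - ‖x‖ : ℝ) : ℂ) ^ (s - (N:ℂ)) = ∫ x : E, f ‖x‖ := by
    rw [← MeasureTheory.integral_indicator measurableSet_ball]
    congr 1
    funext x
    by_cases hx : ‖x‖ < 1
    · rw [Set.indicator_of_mem (mem_ball_zero_iff.2 hx), hf]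
      simp [hx]
    · rw [Set.indicator_of_notMem (fun h => hx (mem_ball_zero_iff.1 h)), hf]
      simp [hx]
  have hdim : Module.finrank ℝ E = N := finrank_euclideanSpace_fin
  have step2 := integral_fun_norm_addHaar (volume : Measure E) f
  rw [hdim] at step2
  have step3 : ∫ y in Set.Ioi (0:ℝ), y ^ (N - 1) • f y =
      ∫ y in Set.Ioo (0:ℝ) 1, y ^ (N - 1) • ((1 - y : ℝ) : ℂ) ^ (s - (N:ℂ)) := by
    have : ∀ y : ℝ, y ^ (N - 1) • f y =
        Set.indicator (Set.Iio 1) (fun y => y ^ (N - 1) • ((1 - y : ℝ) : ℂ) ^ (s - (N:ℂ))) y := by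
      intro y
      by_cases hy : y < 1
      · rw [Set.indicator_of_mem (show y ∈ Set.Iio 1 from hy), hf]; simp [hy]
      · rw [Set.indicator_of_notMem (show y ∉ Set.Iio 1 from hy), hf]; simp [hy]
    simp_rw [this]
    rw [setIntegral_indicator measurableSet_Iio, Set.Ioi_inter_Iio]
  have step4 : ∫ y in Set.Ioo (0:ℝ) 1, y ^ (N - 1) • ((1 - y : ℝ) : ℂ) ^ (s - (N:ℂ)) =
      ∫ y in (0:ℝ)..1, (1 - (y:ℂ)) ^ (N - 1) * (y:ℂ) ^ (s - (N:ℂ)) := by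
    have e1 : ∫ y in Set.Ioo (0:ℝ) 1, y ^ (N - 1) • ((1 - y : ℝ) : ℂ) ^ (s - (N:ℂ)) =
        ∫ y in (0:ℝ)..1, (y:ℂ) ^ (N - 1) * ((1 - y : ℝ) : ℂ) ^ (s - (N:ℂ)) := by
      rw [intervalIntegral.integral_of_le zero_le_one, integral_Ioc_eq_integral_Ioo]
      refine setIntegral_congr_fun measurableSet_Ioo (fun y _ => ?_)
      rw [Complex.real_smul, Complex.ofReal_pow]
    have e2 := integral_comp_sub_left (a := (0:ℝ)) (b := 1)
      (fun u : ℝ => (1 - (u:ℂ)) ^ (N - 1) * (u:ℂ) ^ (s - (N:ℂ))) 1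
    simp only [sub_self, sub_zero] at e2
    rw [e1, ← e2]
    refine integral_congr (fun y _ => ?_)
    have : ((1 - y : ℝ) : ℂ) = 1 - (y:ℂ) := by push_cast; ring
    rw [this]
    rw [show (1:ℂ) - (1 - (y:ℂ)) = (y:ℂ) by ring]
  rw [step1, step2, step3, step4, nsmul_eq_mul, Complex.real_smul]
  rw [measureReal_def]
  ring
/-- The relative distance zeta function of the `(N−1)`-sphere RFD `(∂Ω, Ω)`,
`Ω` the open unit ball: for `Re(s) > N−1`,
`∫_Ω d(x,∂Ω)^{s−N} dx = N ω_N ∑_{j=0}^{N−1} C(N−1,j)(−1)^{N−j−1}/(s−j)`;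
the right-hand side is meromorphic in all of ℂ, analytic away from
`{0,1,…,N−1}` and with a simple pole of residue `N ω_N C(N−1,j)(−1)^{N−j−1}`
at each `j ∈ {0,1,…,N−1}`. -/
theorem stmt_12 (N : ℕ) (hN : 0 < N)
    (A Ω : Set (EuclideanSpace ℝ (Fin N)))
    (hA : A = Metric.sphere (0 : EuclideanSpace ℝ (Fin N)) 1)
    (hΩ : Ω = Metric.ball (0 : EuclideanSpace ℝ (Fin N)) 1)
    (ωN : ℝ) (hω : ωN = (volume (Metric.ball (0 : EuclideanSpace ℝ (Fin N)) 1)).toReal)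
    (g : ℂ → ℂ)
    (hg : g = fun s : ℂ => (N : ℂ) * (ωN : ℂ) *
      ∑ j ∈ Finset.range N,
        ((N - 1).choose j : ℂ) * (-1 : ℂ) ^ (N - j - 1) / (s - (j : ℂ))) :
    (∀ s : ℂ, (N : ℝ) - 1 < s.re →
      ∫ x in Ω, ((Metric.infDist x A : ℝ) : ℂ) ^ (s - (N : ℂ)) = g s) ∧
    MeromorphicOn g Set.univ ∧
    (∀ s : ℂ, (∀ j ∈ Finset.range N, s ≠ (j : ℂ)) → AnalyticAt ℂ g s) ∧
    (∀ j ∈ Finset.range N,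
      Tendsto (fun s : ℂ => (s - (j : ℂ)) * g s) (𝓝[≠] (j : ℂ))
        (𝓝 ((N : ℂ) * (ωN : ℂ) * ((N - 1).choose j : ℂ) * (-1 : ℂ) ^ (N - j - 1)))) := by
  haveI : Nontrivial (EuclideanSpace ℝ (Fin N)) := by
    apply Module.nontrivial_of_finrank_pos (R := ℝ)
    rw [finrank_euclideanSpace_fin]; exact hN
  set c : ℕ → ℂ := fun j => ((N - 1).choose j : ℂ) * (-1 : ℂ) ^ (N - j - 1) with hc
  refine ⟨?_, ?_, ?_, ?_⟩
  · intro s hs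
    subst hA hΩ hg
    have hcongr : ∫ x in ball (0 : EuclideanSpace ℝ (Fin N)) 1,
        ((Metric.infDist x (Metric.sphere (0 : EuclideanSpace ℝ (Fin N)) 1) : ℝ) : ℂ)
          ^ (s - (N : ℂ)) =
        ∫ x in ball (0 : EuclideanSpace ℝ (Fin N)) 1,
          ((1 - ‖x‖ : ℝ) : ℂ) ^ (s - (N : ℂ)) := by
      refine setIntegral_congr_fun measurableSet_ball (fun x hx => ?_)
      rw [infdist_sphere x (mem_ball_zero_iff.1 hx)]
    rw [hcongr, ball_int N hN s, oneD N hN s hs, hω]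
  · subst hg
    intro x _
    exact (MeromorphicAt.const _ x).mul (merosum (Finset.range N) c x)
  · intro s hsj
    subst hg
    exact analyticAt_const.mul (anasum (Finset.range N) c s hsj)
  · intro j hj
    subst hg
    have h2 : Tendsto (fun s : ℂ => (s - (j:ℂ)) *
        ((N:ℂ) * (ωN:ℂ) * ∑ i ∈ Finset.range N, c i / (s - (i:ℂ))))
        (𝓝[≠] (j:ℂ)) (𝓝 ((N:ℂ) * (ωN:ℂ) * c j)) := by
      refine ((residue N c j hj).const_mul ((N : ℂ) * (ωN : ℂ))).congr (fun s => ?_)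
      ring
    have h3 : (N:ℂ) * (ωN:ℂ) * c j
        = (N : ℂ) * (ωN : ℂ) * ((N - 1).choose j : ℂ) * (-1 : ℂ) ^ (N - j - 1) := by
      simp only [hc]; ring
    rw [h3] at h2
    exact h2
end

section
/- Let α > 1, A = {(0,0)} ⊆ ℝ², and Ω = { (x,y) : 0 < y < x^α, 0 < x < 1 }. Then the relative fractal drum (A, Ω) is Minkowski measurable with Minkowski dimension D = 1 − α (which is negative) and Minkowski content M = 1/(1+α); i.e., lim_{ε→0^+} |A_ε ∩ Ω| / ε^{2−(1−α)} = 1/(1+α). -/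
open MeasureTheory Filter Topology Set

lemma vol_cusp (α : ℝ) (hα : 0 < α) (c : ℝ) (hc : 0 < c) :
    volume {p : EuclideanSpace ℝ (Fin 2) | 0 < p 0 ∧ p 0 < c ∧ 0 < p 1 ∧ p 1 < p 0 ^ α}
      = ENNReal.ofReal (c ^ (α + 1) / (α + 1)) := by
  have hmp : MeasurePreserving
      ((MeasurableEquiv.toLp 2 (Fin 2 → ℝ)).symm.trans MeasurableEquiv.finTwoArrow)
      volume volume :=
    (EuclideanSpace.volume_preserving_symm_measurableEquiv_toLp (Fin 2)).trans
      (volume_preserving_finTwoArrow ℝ)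
  have hg : Measurable fun x : ℝ => x ^ α :=
    (Real.continuous_rpow_const hα.le).measurable
  have hB : MeasurableSet (regionBetween (fun _ : ℝ => (0:ℝ)) (fun x => x ^ α) (Ioo 0 c)) :=
    measurableSet_regionBetween measurable_const hg measurableSet_Ioo
  have hpre : {p : EuclideanSpace ℝ (Fin 2) | 0 < p 0 ∧ p 0 < c ∧ 0 < p 1 ∧ p 1 < p 0 ^ α}
      = ((MeasurableEquiv.toLp 2 (Fin 2 → ℝ)).symm.trans MeasurableEquiv.finTwoArrow) ⁻¹'
        (regionBetween (fun _ : ℝ => (0:ℝ)) (fun x => x ^ α) (Ioo 0 c)) := by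
    ext p
    simp [regionBetween, MeasurableEquiv.toLp, MeasurableEquiv.finTwoArrow]
    tauto
  rw [hpre, hmp.measure_preimage hB.nullMeasurableSet]
  have hint : IntegrableOn (fun x : ℝ => x ^ α) (Ioo 0 c) volume :=
    (intervalIntegrable_iff_integrableOn_Ioo_of_le hc.le).1
      (intervalIntegral.intervalIntegrable_rpow' (by linarith))
  have := volume_regionBetween_eq_integral (f := fun _ : ℝ => (0:ℝ))
    (g := fun x : ℝ => x ^ α) (s := Ioo 0 c) (integrableOn_const measure_Ioo_lt_top.ne)
    hint measurableSet_Ioo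
    (fun x hx => Real.rpow_nonneg hx.1.le α)
  rw [← Measure.volume_eq_prod] at this
  rw [this]
  simp only [Pi.sub_apply, sub_zero]
  congr 1
  rw [← integral_Ioc_eq_integral_Ioo, ← intervalIntegral.integral_of_le hc.le,
    integral_rpow (Or.inl (by linarith))]
  rw [Real.zero_rpow (by linarith)]
  ring

/-- The cusp RFD `(A, Ω)` with `A = {(0,0)} ⊆ ℝ²` and
`Ω = {(x,y) : 0 < x < 1, 0 < y < x^α}` (`α > 1`) is Minkowski measurable with
(negative) Minkowski dimension `D = 1 − α` and Minkowski content `1/(1+α)`: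
`|A_ε ∩ Ω|/ε^{2−(1−α)} → 1/(1+α)` as `ε → 0⁺`. -/
theorem stmt_13 (α : ℝ) (hα : 1 < α)
    (A Ω : Set (EuclideanSpace ℝ (Fin 2)))
    (hA : A = {(0 : EuclideanSpace ℝ (Fin 2))})
    (hΩ : Ω = {p : EuclideanSpace ℝ (Fin 2) |
      0 < p 0 ∧ p 0 < 1 ∧ 0 < p 1 ∧ p 1 < p 0 ^ α}) :
    Tendsto (fun ε : ℝ =>
        (volume ({x | Metric.infDist x A < ε} ∩ Ω)).toReal / ε ^ (2 - (1 - α)))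
      (𝓝[>] 0) (𝓝 (1 / (1 + α))) := by
  have hα0 : (0:ℝ) < α := by linarith
  have hβ : (0:ℝ) < α + 1 := by linarith
  set β := α + 1 with hβdef
  -- lower comparison function
  set ℓ : ℝ → ℝ := fun ε => (1 / (1 + ε ^ (2*α - 2))) ^ β / β with hℓ
  have hlow : Tendsto ℓ (𝓝[>] 0) (𝓝 (1 / (1 + α))) := by
    have h1 : Tendsto (fun ε : ℝ => ε ^ (2*α - 2)) (𝓝[>] 0) (𝓝 0) := by
      have := (Real.continuousAt_rpow_const 0 (2*α - 2) (Or.inr (by linarith))).tendsto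
      rw [Real.zero_rpow (by linarith)] at this
      exact this.mono_left nhdsWithin_le_nhds
    have h2 : ContinuousAt (fun t : ℝ => (1 / (1 + t)) ^ β / β) 0 := by
      have : ContinuousAt (fun t : ℝ => 1 / (1 + t)) 0 :=
        continuousAt_const.div (continuousAt_const.add continuousAt_id) (by norm_num)
      exact (this.rpow_const (Or.inr hβ.le)).div_const _
    have h3 : Tendsto ℓ (𝓝[>] 0) (𝓝 ((1 / (1 + (0:ℝ))) ^ β / β)) := h2.tendsto.comp h1
    have hval : (1 / (1 + (0:ℝ))) ^ β / β = 1 / (1 + α) := by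
      rw [add_zero, div_one, Real.one_rpow, hβdef, add_comm]
    exact hval ▸ h3
  have hhi : Tendsto (fun _ : ℝ => 1 / β) (𝓝[>] 0) (𝓝 (1 / (1 + α))) := by
    simpa [hβdef, add_comm] using tendsto_const_nhds (α := ℝ) (x := 1/β) (f := 𝓝[>] (0:ℝ))
  apply tendsto_of_tendsto_of_tendsto_of_le_of_le' hlow hhi
  · -- lower ≤ f eventually
    filter_upwards [Ioo_mem_nhdsGT_of_mem (show (0:ℝ) ∈ Ico 0 1 by norm_num)] with ε hε
    obtain ⟨hε0, hε1⟩ := hε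
    set u := ε ^ (2*α - 2) with hu
    have hu0 : 0 ≤ u := Real.rpow_nonneg hε0.le _
    have h1u : (0:ℝ) < 1 + u := by linarith
    set c := ε / (1 + u) with hc
    have hc0 : 0 < c := div_pos hε0 h1u
    have hcε : c ≤ ε := by
      rw [hc, div_le_iff₀ h1u]; nlinarith
    -- subset
    have hsub : {p : EuclideanSpace ℝ (Fin 2) | 0 < p 0 ∧ p 0 < c ∧ 0 < p 1 ∧ p 1 < p 0 ^ α}
        ⊆ {x | Metric.infDist x A < ε} ∩ Ω := by
      rintro p ⟨h0, h1, h2, h3⟩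
      have hp0ε : p 0 < ε := lt_of_lt_of_le h1 hcε
      have hball : p 0 ^ 2 + p 1 ^ 2 < ε ^ 2 := by
        have hw : p 0 ^ (2*α - 2) ≤ u := by
          rw [hu]; exact Real.rpow_le_rpow h0.le hp0ε.le (by linarith)
        have hp1sq : p 1 ^ 2 < p 0 ^ 2 * p 0 ^ (2*α - 2) := by
          have : p 1 ^ 2 < (p 0 ^ α) ^ 2 := by nlinarith
          calc p 1 ^ 2 < (p 0 ^ α) ^ 2 := this
            _ = p 0 ^ α * p 0 ^ α := sq (p 0 ^ α) ▸ (sq (p 0 ^ α))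
            _ = p 0 ^ (α + α) := (Real.rpow_add h0 α α).symm
            _ = p 0 ^ ((2:ℝ) + (2*α - 2)) := by ring_nf
            _ = p 0 ^ (2:ℝ) * p 0 ^ (2*α - 2) := Real.rpow_add h0 _ _
            _ = p 0 ^ 2 * p 0 ^ (2*α - 2) := by rw [Real.rpow_two]
        have hce : c * (1 + u) = ε := div_mul_cancel₀ ε (ne_of_gt h1u)
        have e1 : p 1 ^ 2 < p 0 ^ 2 * u :=
          lt_of_lt_of_le hp1sq (mul_le_mul_of_nonneg_left hw (sq_nonneg _))
        have e2 : p 0 ^ 2 * (1 + u) < c ^ 2 * (1 + u) :=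
          mul_lt_mul_of_pos_right (by nlinarith) h1u
        have e3 : c ^ 2 * (1 + u) = c * ε := by rw [← hce]; ring
        have e4 : c * ε ≤ ε * ε := mul_le_mul_of_nonneg_right hcε hε0.le
        nlinarith
      constructor
      · show Metric.infDist p A < ε
        rw [hA, Metric.infDist_singleton, dist_zero_right, EuclideanSpace.norm_eq,
          Real.sqrt_lt' hε0]
        simpa [Fin.sum_univ_two, Real.norm_eq_abs, sq_abs] using hball
      · rw [hΩ]; exact ⟨h0, lt_of_lt_of_le hp0ε hε1.le, h2, h3⟩
    have hV : ENNReal.ofReal (c ^ β / β)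
        ≤ volume ({x | Metric.infDist x A < ε} ∩ Ω) := by
      rw [← vol_cusp α hα0 c hc0]; exact measure_mono hsub
    -- also upper finiteness
    have hsub2 : {x | Metric.infDist x A < ε} ∩ Ω
        ⊆ {p : EuclideanSpace ℝ (Fin 2) | 0 < p 0 ∧ p 0 < ε ∧ 0 < p 1 ∧ p 1 < p 0 ^ α} := by
      rintro p ⟨hd, hp⟩
      rw [hΩ] at hp
      obtain ⟨h0, h1, h2, h3⟩ := hp
      have hball : p 0 ^ 2 + p 1 ^ 2 < ε ^ 2 := by
        have := hd
        rw [Set.mem_setOf_eq, hA, Metric.infDist_singleton, dist_zero_right,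
          EuclideanSpace.norm_eq, Real.sqrt_lt' hε0] at this
        simpa [Fin.sum_univ_two, Real.norm_eq_abs, sq_abs] using this
      exact ⟨h0, by nlinarith, h2, h3⟩
    have hVfin : volume ({x | Metric.infDist x A < ε} ∩ Ω) ≠ ⊤ := by
      refine ne_top_of_le_ne_top ?_ (measure_mono hsub2)
      rw [vol_cusp α hα0 ε hε0]; exact ENNReal.ofReal_ne_top
    have hVr : c ^ β / β ≤ (volume ({x | Metric.infDist x A < ε} ∩ Ω)).toReal := by
      have := ENNReal.toReal_mono hVfin hV
      rwa [ENNReal.toReal_ofReal (by positivity)] at this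
    -- now convert to ratio
    have hεβ : (0:ℝ) < ε ^ β := Real.rpow_pos_of_pos hε0 β
    have hcβ : c ^ β = ε ^ β * (1 / (1 + u)) ^ β := by
      rw [hc, div_eq_mul_inv, ← one_div, Real.mul_rpow hε0.le (by positivity)]
    have : ℓ ε = (c ^ β / β) / ε ^ β := by
      rw [hℓ]; simp only; rw [hcβ]; field_simp; rw [hu]; ring_nf
    rw [show (2:ℝ) - (1 - α) = β by rw [hβdef]; ring, this]
    exact div_le_div_of_nonneg_right hVr hεβ.le
  · -- f ≤ 1/β eventually
    filter_upwards [Ioo_mem_nhdsGT_of_mem (show (0:ℝ) ∈ Ico 0 1 by norm_num)] with ε hε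
    obtain ⟨hε0, hε1⟩ := hε
    have hsub2 : {x | Metric.infDist x A < ε} ∩ Ω
        ⊆ {p : EuclideanSpace ℝ (Fin 2) | 0 < p 0 ∧ p 0 < ε ∧ 0 < p 1 ∧ p 1 < p 0 ^ α} := by
      rintro p ⟨hd, hp⟩
      rw [hΩ] at hp
      obtain ⟨h0, h1, h2, h3⟩ := hp
      have hball : p 0 ^ 2 + p 1 ^ 2 < ε ^ 2 := by
        have := hd
        rw [Set.mem_setOf_eq, hA, Metric.infDist_singleton, dist_zero_right,
          EuclideanSpace.norm_eq, Real.sqrt_lt' hε0] at this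
        simpa [Fin.sum_univ_two, Real.norm_eq_abs, sq_abs] using this
      exact ⟨h0, by nlinarith, h2, h3⟩
    have hV : volume ({x | Metric.infDist x A < ε} ∩ Ω) ≤ ENNReal.ofReal (ε ^ β / β) := by
      rw [← vol_cusp α hα0 ε hε0]; exact measure_mono hsub2
    have hVr : (volume ({x | Metric.infDist x A < ε} ∩ Ω)).toReal ≤ ε ^ β / β := by
      have := ENNReal.toReal_mono ENNReal.ofReal_ne_top hV
      rwa [ENNReal.toReal_ofReal (by positivity)] at this
    have hεβ : (0:ℝ) < ε ^ β := Real.rpow_pos_of_pos hε0 β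
    rw [show (2:ℝ) - (1 - α) = β by rw [hβdef]; ring]
    calc (volume ({x | Metric.infDist x A < ε} ∩ Ω)).toReal / ε ^ β
        ≤ (ε ^ β / β) / ε ^ β := div_le_div_of_nonneg_right hVr hεβ.le
      _ = 1 / β := by field_simp
end

section
/- Let A = {(0,0)} ⊆ ℝ² and Ω = { (x,y) : 0 < y < e^{-1/x}, 0 < x < 1 }. Then for every β ∈ ℝ, |A_ε ∩ Ω| = O(ε^{2−β}) as ε → 0^+; i.e., the relative Minkowski dimension of (A, Ω) is −∞. -/
open MeasureTheory Filter Topology Asymptotics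

lemma coord_le_norm (p : EuclideanSpace ℝ (Fin 2)) (i : Fin 2) : |p i| ≤ ‖p‖ := by
  rw [EuclideanSpace.norm_eq]
  have : |p i| = Real.sqrt (‖p i‖ ^ 2) := by
    rw [Real.sqrt_sq_eq_abs]; simp [abs_abs]
  rw [this]
  apply Real.sqrt_le_sqrt
  exact Finset.single_le_sum (f := fun j => ‖p j‖ ^ 2) (fun j _ => by positivity) (Finset.mem_univ i)

/-- For `A = {(0,0)} ⊆ ℝ²` and `Ω = {(x,y) : 0 < x < 1, 0 < y < e^{−1/x}}`,
one has `|A_ε ∩ Ω| = O(ε^{2−β})` as `ε → 0⁺` for every `β ∈ ℝ`; i.e. the relative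
Minkowski dimension of `(A, Ω)` is `−∞`. -/
theorem stmt_14 (A Ω : Set (EuclideanSpace ℝ (Fin 2)))
    (hA : A = {(0 : EuclideanSpace ℝ (Fin 2))})
    (hΩ : Ω = {p : EuclideanSpace ℝ (Fin 2) |
      0 < p 0 ∧ p 0 < 1 ∧ 0 < p 1 ∧ p 1 < Real.exp (-(1 / p 0))}) :
    ∀ β : ℝ,
      (fun ε : ℝ => (volume ({x | Metric.infDist x A < ε} ∩ Ω)).toReal)
        =O[𝓝[>] 0] fun ε : ℝ => ε ^ (2 - β) := by
  intro β
  -- step 1: measure bound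
  have hvol : ∀ ε : ℝ, 0 < ε →
      (volume ({x | Metric.infDist x A < ε} ∩ Ω)).toReal ≤ ε * Real.exp (-(1/ε)) := by
    intro ε hε
    set c := Real.exp (-(1/ε)) with hc
    have hcpos : 0 < c := Real.exp_pos _
    have hsub : {x | Metric.infDist x A < ε} ∩ Ω ⊆
        ((MeasurableEquiv.toLp 2 (Fin 2 → ℝ)).symm) ⁻¹'
          (Set.univ.pi fun i : Fin 2 => if i = 0 then Set.Ioo 0 ε else Set.Ioo 0 c) := by
      rintro p ⟨hp1, hp2⟩
      rw [hA] at hp1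
      rw [hΩ] at hp2
      obtain ⟨h0, h1, h2, h3⟩ := hp2
      simp only [Set.mem_setOf_eq, Metric.infDist_singleton, dist_zero_right] at hp1
      have hp0 : p 0 < ε := lt_of_le_of_lt (le_trans (le_abs_self _) (coord_le_norm p 0)) hp1
      have hcc : p 1 < c := by
        refine lt_of_lt_of_le h3 ?_
        rw [hc]
        apply Real.exp_le_exp.2
        simp only [neg_le_neg_iff]
        exact one_div_le_one_div_of_le h0 hp0.le
      intro i _
      fin_cases i <;> simpa [MeasurableEquiv.toLp] using ⟨by assumption, by assumption⟩
    have hmeas : volume ({x | Metric.infDist x A < ε} ∩ Ω) ≤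
        ENNReal.ofReal ε * ENNReal.ofReal c := by
      refine le_trans (measure_mono hsub) ?_
      rw [(EuclideanSpace.volume_preserving_symm_measurableEquiv_toLp (Fin 2)).measure_preimage
        ((MeasurableSet.univ_pi (fun i => by
          split <;> exact measurableSet_Ioo)).nullMeasurableSet)]
      rw [volume_pi_pi]
      rw [Fin.prod_univ_two]
      simp [Real.volume_Ioo]
    calc (volume ({x | Metric.infDist x A < ε} ∩ Ω)).toReal
        ≤ (ENNReal.ofReal ε * ENNReal.ofReal c).toReal :=
          ENNReal.toReal_mono (by finiteness) hmeas
      _ = ε * c := by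
          rw [ENNReal.toReal_mul, ENNReal.toReal_ofReal hε.le, ENNReal.toReal_ofReal hcpos.le]
  -- step 2: eventual bound exp(-1/ε) ≤ ε^(1-β)
  have hev : ∀ᶠ ε : ℝ in 𝓝[>] 0, Real.exp (-(1/ε)) ≤ ε ^ (1 - β) := by
    have h1 : Tendsto (fun t : ℝ => t ^ (1 - β) * Real.exp (-1 * t)) atTop (𝓝 0) :=
      tendsto_rpow_mul_exp_neg_mul_atTop_nhds_zero _ _ one_pos
    have h2 : ∀ᶠ t : ℝ in atTop, t ^ (1 - β) * Real.exp (-1 * t) ≤ 1 :=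
      (h1.eventually (eventually_le_nhds one_pos))
    have h3 := (tendsto_inv_nhdsGT_zero.eventually h2).and self_mem_nhdsWithin
    filter_upwards [h3] with ε hε
    obtain ⟨hle, hpos⟩ := hε
    have hr : (0:ℝ) < ε ^ (1 - β) := Real.rpow_pos_of_pos hpos _
    rw [Real.inv_rpow hpos.le] at hle
    have h4 := mul_le_mul_of_nonneg_left hle hr.le
    rw [mul_one, ← mul_assoc, mul_inv_cancel₀ hr.ne', one_mul] at h4
    have harg : -1 * ε⁻¹ = -(1/ε) := by ring
    rwa [harg] at h4
  -- step 3: combine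
  rw [isBigO_iff]
  refine ⟨1, ?_⟩
  filter_upwards [hev, self_mem_nhdsWithin] with ε h1 h2
  rw [Set.mem_Ioi] at h2
  have hnn : (0:ℝ) ≤ (volume ({x | Metric.infDist x A < ε} ∩ Ω)).toReal :=
    ENNReal.toReal_nonneg
  rw [Real.norm_eq_abs, Real.norm_eq_abs, abs_of_nonneg hnn, abs_of_nonneg (Real.rpow_nonneg h2.le _), one_mul]
  calc (volume ({x | Metric.infDist x A < ε} ∩ Ω)).toReal
      ≤ ε * Real.exp (-(1/ε)) := hvol ε h2
    _ ≤ ε * ε ^ (1 - β) := by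
        exact mul_le_mul_of_nonneg_left h1 h2.le
    _ = ε ^ (2 - β) := by
        rw [show (2 - β) = 1 + (1 - β) by ring, Real.rpow_add h2, Real.rpow_one]
end
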